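/- Let ε > 0 and let Γ₁, Γ₂ be metric spaces in which distinct points are at distance at least ε, and let f : Γ₁ → Γ₂ be a (K,K)-quasi-isometry. Then the map F : H(Γ₁) → H(Γ₂) defined on vertices by F(x,n) = (f(x),n) extends to a (K',K')-quasi-isometry of the combinatorial horoballs, where K' depends only on K and ε. -/

import Mathlib

open scoped ENNReal Classical

/-! A map of vertex sets that stretches every edge by a factor at most `C` stretches the path
metric by at most `C`. Since distinct points of `Γ₁` are `ε`-apart, the coarse bound
`d(f x, f y) ≤ K d(x, y) + K` improves to the Lipschitz bound `(K + K/ε) d(x, y)` on distinct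
points; horizontal edges at level `n` are rescaled by the same factor `e^{-n}` on both sides and
vertical edges go to vertical edges, so `F` is `(K + K/ε)`-Lipschitz. A quasi-inverse `g` of `f`
is coarsely Lipschitz as well, so `G(z, n) = (g z, n)` is `(K + 3K²/ε)`-Lipschitz, and `G ∘ F`
moves every vertex horizontally by at most `2K²`, which costs at most `2K²` in `H(Γ₁)`. This gives
the lower bound, and `F` is coarsely surjective level by level because `f` is. -/

/-- The total length of a chain (finite path) of vertices, where consecutive
vertices are charged according to the edge-weight function `w`. -/
noncomputable def chainCost {V : Type*} (w : V → V → ℝ≥0∞) : List V → ℝ≥0∞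
  | [] => 0
  | [_] => 0
  | u :: v :: l => w u v + chainCost w (v :: l)

/-- The path metric of the weighted graph with edge-weight function `w`. -/
noncomputable def pathDist {V : Type*} (w : V → V → ℝ≥0∞) (u v : V) : ℝ≥0∞ :=
  ⨅ (l : List V) (_ : l.head? = some u) (_ : l.getLast? = some v), chainCost w l

/-- The edge weights of the combinatorial horoball over a metric space `Γ`. -/
noncomputable def horoballWeight (Γ : Type*) [MetricSpace Γ] :
    Γ × ℕ → Γ × ℕ → ℝ≥0∞ := fun p q =>
  if p.1 = q.1 ∧ (q.2 = p.2 + 1 ∨ p.2 = q.2 + 1) then 1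
  else if p.2 = q.2 ∧ p.1 ≠ q.1 then
    ENNReal.ofReal (Real.exp (-(p.2 : ℝ)) * dist p.1 q.1)
  else ⊤

section PathDist

variable {V : Type*} (w : V → V → ℝ≥0∞)

lemma pathDist_le_chainCost {u v : V} {l : List V} (hu : l.head? = some u)
    (hv : l.getLast? = some v) : pathDist w u v ≤ chainCost w l :=
  iInf₂_le_of_le l hu (iInf_le _ hv)

@[simp]
lemma pathDist_self (u : V) : pathDist w u u = 0 :=
  nonpos_iff_eq_zero.1 (pathDist_le_chainCost w (l := [u]) rfl rfl)

lemma pathDist_le_weight (u v : V) : pathDist w u v ≤ w u v := by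
  simpa [chainCost] using pathDist_le_chainCost w (l := [u, v]) rfl rfl

lemma chainCost_append_le {z : V} {l : List V} (hz : l.getLast? = some z) (t : List V) :
    chainCost w (l ++ t) ≤ chainCost w l + chainCost w (z :: t) := by
  induction l with
  | nil => simp at hz
  | cons a l ih =>
    cases l with
    | nil =>
      obtain rfl : a = z := by simpa using hz
      simp [chainCost]
    | cons b l =>
      rw [List.getLast?_cons_cons] at hz
      simpa only [List.cons_append, chainCost, add_assoc] using add_le_add_right (ih hz) _

lemma pathDist_triangle (u z v : V) : pathDist w u v ≤ pathDist w u z + pathDist w z v := by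
  simp only [pathDist, ENNReal.iInf_add, ENNReal.add_iInf]
  refine le_iInf fun l₂ => le_iInf fun hl₂ => le_iInf fun hl₂' => le_iInf fun l₁ =>
    le_iInf fun hl₁ => le_iInf fun hl₁' => ?_
  obtain ⟨t, rfl⟩ : ∃ t, l₂ = z :: t := by
    cases l₂ with
    | nil => simp at hl₂
    | cons a t => exact ⟨t, by simpa using hl₂⟩
  refine (pathDist_le_chainCost w (l := l₁ ++ t) ?_ ?_).trans (chainCost_append_le w hl₁' t)
  · cases l₁ with
    | nil => simp at hl₁
    | cons a l => simpa using hl₁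
  · cases t with
    | nil => simpa [hl₁'] using hl₂'
    | cons b t => simpa [List.getLast?_append, List.getLast?_cons_cons] using hl₂'

lemma le_mul_pathDist {d : V → V → ℝ≥0∞} {C : ℝ≥0∞} (hC₀ : C ≠ 0) (hC : C ≠ ⊤)
    (hself : ∀ u, d u u = 0) (htri : ∀ u z v, d u v ≤ d u z + d z v)
    (hw : ∀ u v, d u v ≤ C * w u v) (u v : V) : d u v ≤ C * pathDist w u v := by
  have hchain : ∀ (l : List V) (u : V), l.head? = some u → l.getLast? = some v →
      d u v ≤ C * chainCost w l := by
    intro l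
    induction l with
    | nil => simp
    | cons a t ih =>
      rintro u ⟨⟩ hv
      cases t with
      | nil =>
        obtain rfl : a = v := by simpa using hv
        simp [hself]
      | cons b t =>
        rw [List.getLast?_cons_cons] at hv
        calc d a v ≤ d a b + d b v := htri a b v
          _ ≤ C * w a b + C * chainCost w (b :: t) := add_le_add (hw a b) (ih b rfl hv)
          _ = C * chainCost w (a :: b :: t) := by rw [chainCost, mul_add]
  simp only [pathDist, ENNReal.mul_iInf_of_ne hC₀ hC]
  exact le_iInf fun l => le_iInf fun hu => le_iInf fun hv => hchain l u hu hv

lemma pathDist_comp_le {V' : Type*} {w' : V' → V' → ℝ≥0∞} {g : V → V'} {C : ℝ≥0∞}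
    (hC₀ : C ≠ 0) (hC : C ≠ ⊤) (h : ∀ u v, g u ≠ g v → w' (g u) (g v) ≤ C * w u v)
    (u v : V) : pathDist w' (g u) (g v) ≤ C * pathDist w u v := by
  refine le_mul_pathDist w hC₀ hC (fun u => pathDist_self w' (g u))
    (fun u z v => pathDist_triangle w' _ (g z) _) (fun u v => ?_) u v
  by_cases huv : g u = g v
  · simp [huv]
  · exact (pathDist_le_weight w' _ _).trans (h u v huv)

end PathDist

section Horoball

variable {Γ : Type*} [MetricSpace Γ]

lemma pathDist_horoballWeight_vertical_ne_top (x : Γ) (n m : ℕ) :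
    pathDist (horoballWeight Γ) (x, n) (x, m) ≠ ⊤ := by
  have hstep : ∀ {n m : ℕ}, (m = n + 1 ∨ n = m + 1) →
      pathDist (horoballWeight Γ) (x, n) (x, m) ≠ ⊤ := fun h =>
    ne_top_of_le_ne_top ENNReal.one_ne_top
      ((pathDist_le_weight _ _ _).trans (by simp [horoballWeight, h]))
  have hdown : ∀ n, pathDist (horoballWeight Γ) (x, n) (x, 0) ≠ ⊤ := by
    intro n
    induction n with
    | zero => simp
    | succ n ih =>
      exact ne_top_of_le_ne_top (ENNReal.add_ne_top.2 ⟨hstep (Or.inr rfl), ih⟩)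
        (pathDist_triangle _ _ (x, n) _)
  have hup : ∀ m, pathDist (horoballWeight Γ) (x, 0) (x, m) ≠ ⊤ := by
    intro m
    induction m with
    | zero => simp
    | succ m ih =>
      exact ne_top_of_le_ne_top (ENNReal.add_ne_top.2 ⟨ih, hstep (Or.inl rfl)⟩)
        (pathDist_triangle _ _ (x, m) _)
  exact ne_top_of_le_ne_top (ENNReal.add_ne_top.2 ⟨hdown n, hup m⟩)
    (pathDist_triangle _ _ (x, 0) _)

lemma pathDist_horoballWeight_horizontal_le (x y : Γ) (n : ℕ) :
    pathDist (horoballWeight Γ) (x, n) (y, n) ≤ ENNReal.ofReal (dist x y) := by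
  by_cases hxy : x = y
  · simp [hxy]
  have hweight : horoballWeight Γ (x, n) (y, n) = ENNReal.ofReal (Real.exp (-n) * dist x y) := by
    simp [horoballWeight, hxy]
  refine (pathDist_le_weight _ _ _).trans (hweight.trans_le (ENNReal.ofReal_le_ofReal ?_))
  exact mul_le_of_le_one_left dist_nonneg (Real.exp_le_one_iff.2 (by simp))

lemma pathDist_horoballWeight_ne_top (p q : Γ × ℕ) : pathDist (horoballWeight Γ) p q ≠ ⊤ :=
  ne_top_of_le_ne_top
    (ENNReal.add_ne_top.2 ⟨ne_top_of_le_ne_top ENNReal.ofReal_ne_top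
      (pathDist_horoballWeight_horizontal_le p.1 q.1 p.2),
      pathDist_horoballWeight_vertical_ne_top q.1 p.2 q.2⟩)
    (pathDist_triangle _ p (q.1, p.2) q)

lemma horoballWeight_map_le {Γ' : Type*} [MetricSpace Γ'] {φ : Γ → Γ'} {L : ℝ} (hL : 1 ≤ L)
    (hφ : ∀ x y, x ≠ y → dist (φ x) (φ y) ≤ L * dist x y) {p q : Γ × ℕ}
    (hpq : (φ p.1, p.2) ≠ (φ q.1, q.2)) :
    horoballWeight Γ' (φ p.1, p.2) (φ q.1, q.2) ≤ ENNReal.ofReal L * horoballWeight Γ p q := by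
  obtain ⟨x, n⟩ := p
  obtain ⟨y, m⟩ := q
  by_cases hvert : x = y ∧ (m = n + 1 ∨ n = m + 1)
  · obtain ⟨rfl, h⟩ := hvert
    simpa [horoballWeight, h] using hL
  by_cases hhor : n = m ∧ x ≠ y
  · obtain ⟨rfl, hxy⟩ := hhor
    have hφxy : φ x ≠ φ y := fun h => hpq (by rw [h])
    simp only [horoballWeight, hφxy, hxy, false_and, if_false, true_and, ne_eq,
      not_false_eq_true, if_true]
    rw [← ENNReal.ofReal_mul (by linarith)]
    refine ENNReal.ofReal_le_ofReal ?_
    calc Real.exp (-n) * dist (φ x) (φ y) ≤ Real.exp (-n) * (L * dist x y) := by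
          gcongr; exact hφ x y hxy
      _ = L * (Real.exp (-n) * dist x y) := by ring
  · have hL₀ : ENNReal.ofReal L ≠ 0 := by simp; linarith
    simp [horoballWeight, hvert, hhor, ENNReal.mul_top hL₀]

end Horoball

noncomputable def horoDist (Γ : Type*) [MetricSpace Γ] (p q : Γ × ℕ) : ℝ :=
  (pathDist (horoballWeight Γ) p q).toReal

section HoroDist

variable {Γ : Type*} [MetricSpace Γ]

lemma horoDist_triangle (p q r : Γ × ℕ) : horoDist Γ p r ≤ horoDist Γ p q + horoDist Γ q r :=
  ENNReal.toReal_le_add (pathDist_triangle _ p q r) (pathDist_horoballWeight_ne_top p q)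
    (pathDist_horoballWeight_ne_top q r)

lemma horoDist_le_dist (x y : Γ) (n : ℕ) : horoDist Γ (x, n) (y, n) ≤ dist x y :=
  ENNReal.toReal_le_of_le_ofReal dist_nonneg (pathDist_horoballWeight_horizontal_le x y n)

lemma horoDist_map_le {Γ' : Type*} [MetricSpace Γ'] {φ : Γ → Γ'} {L : ℝ} (hL : 1 ≤ L)
    (hφ : ∀ x y, x ≠ y → dist (φ x) (φ y) ≤ L * dist x y) (p q : Γ × ℕ) :
    horoDist Γ' (φ p.1, p.2) (φ q.1, q.2) ≤ L * horoDist Γ p q := by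
  have hL₀ : 0 ≤ L := by linarith
  have h := pathDist_comp_le (horoballWeight Γ) (g := fun p : Γ × ℕ => (φ p.1, p.2))
    (by simp; linarith) ENNReal.ofReal_ne_top (fun u v => horoballWeight_map_le hL hφ) p q
  rw [horoDist, horoDist, ← ENNReal.toReal_ofReal hL₀, ← ENNReal.toReal_mul]
  exact ENNReal.toReal_mono
    (ENNReal.mul_ne_top ENNReal.ofReal_ne_top (pathDist_horoballWeight_ne_top p q)) h

lemma horoDist_le_of_quasiInverse {Γ' : Type*} [MetricSpace Γ'] {f : Γ → Γ'} {g : Γ' → Γ}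
    {L D : ℝ} (hg : ∀ p q : Γ' × ℕ, horoDist Γ (g p.1, p.2) (g q.1, q.2) ≤ L * horoDist Γ' p q)
    (hgf : ∀ x, dist x (g (f x)) ≤ D) (p q : Γ × ℕ) :
    horoDist Γ p q ≤ L * horoDist Γ' (f p.1, p.2) (f q.1, q.2) + 2 * D := by
  obtain ⟨x, n⟩ := p
  obtain ⟨y, m⟩ := q
  calc horoDist Γ (x, n) (y, m)
      ≤ horoDist Γ (x, n) (g (f x), n) + (horoDist Γ (g (f x), n) (g (f y), m) +
          horoDist Γ (g (f y), m) (y, m)) :=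
        (horoDist_triangle _ _ _).trans (add_le_add_right (horoDist_triangle _ _ _) _)
    _ ≤ D + (L * horoDist Γ' (f x, n) (f y, m) + D) := by
        gcongr
        · exact (horoDist_le_dist _ _ n).trans (hgf x)
        · exact hg (f x, n) (f y, m)
        · exact (horoDist_le_dist _ _ m).trans ((dist_comm _ _).trans_le (hgf y))
    _ = L * horoDist Γ' (f x, n) (f y, m) + 2 * D := by ring

end HoroDist

section CoarseMaps

variable {X Y : Type*} [PseudoMetricSpace X] [PseudoMetricSpace Y]

lemma dist_le_mul_dist_of_separated {φ : X → Y} {A B ε : ℝ} (hε : 0 < ε) (hB : 0 ≤ B)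
    (hsep : ∀ x y : X, x ≠ y → ε ≤ dist x y) (hφ : ∀ x y, dist (φ x) (φ y) ≤ A * dist x y + B)
    {x y : X} (hxy : x ≠ y) : dist (φ x) (φ y) ≤ (A + B / ε) * dist x y := by
  have hB' : B ≤ B / ε * dist x y := by
    rw [div_mul_eq_mul_div, le_div_iff₀ hε]
    exact mul_le_mul_of_nonneg_left (hsep x y hxy) hB
  linarith [hφ x y]

lemma dist_le_of_lower_bound {f : X → Y} {K : ℝ} (hK : 0 < K)
    (hf : ∀ x y, 1 / K * dist x y - K ≤ dist (f x) (f y)) (x y : X) :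
    dist x y ≤ K * dist (f x) (f y) + K ^ 2 := by
  have := mul_le_mul_of_nonneg_left (hf x y) hK.le
  rw [mul_sub, ← mul_assoc, mul_one_div_cancel hK.ne', one_mul] at this
  nlinarith

lemma dist_quasiInverse_le {f : X → Y} {g : Y → X} {K : ℝ} (hK : 0 < K)
    (hf : ∀ x y, 1 / K * dist x y - K ≤ dist (f x) (f y)) (hg : ∀ z, dist z (f (g z)) ≤ K)
    (z w : Y) : dist (g z) (g w) ≤ K * dist z w + 3 * K ^ 2 := by
  have hfg : dist (f (g z)) (f (g w)) ≤ dist z w + 2 * K := by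
    linarith [dist_triangle4 (f (g z)) z w (f (g w)), dist_comm z (f (g z)), hg z, hg w]
  nlinarith [dist_le_of_lower_bound hK hf (g z) (g w)]

lemma dist_quasiInverse_comp_le {f : X → Y} {g : Y → X} {K : ℝ} (hK : 0 < K)
    (hf : ∀ x y, 1 / K * dist x y - K ≤ dist (f x) (f y)) (hg : ∀ z, dist z (f (g z)) ≤ K)
    (x : X) : dist x (g (f x)) ≤ 2 * K ^ 2 := by
  nlinarith [dist_le_of_lower_bound hK hf x (g (f x)), hg (f x)]

end CoarseMaps

lemma quasiIsometry_bounds {t₁ t₂ A B C K' : ℝ} (ht₁ : 0 ≤ t₁) (ht₂ : 0 ≤ t₂) (hK' : 1 ≤ K')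
    (hA : A ≤ K') (hB : B ≤ K') (hC : C ≤ K') (hup : t₂ ≤ A * t₁) (hlow : t₁ ≤ B * t₂ + C) :
    1 / K' * t₁ - K' ≤ t₂ ∧ t₂ ≤ K' * t₁ + K' := by
  have hK'₀ : 0 < K' := by linarith
  constructor
  · rw [sub_le_iff_le_add, one_div_mul_eq_div, div_le_iff₀ hK'₀]
    nlinarith [mul_le_mul_of_nonneg_right hB ht₂]
  · nlinarith [mul_le_mul_of_nonneg_right hA ht₁]

/-- a `(K,K)`-quasi-isometry `f : Γ₁ → Γ₂` of `ε`-separated spaces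
induces, via `F(x,n) = (f(x),n)`, a `(K',K')`-quasi-isometry of the
combinatorial horoballs, with `K'` depending only on `K` and `ε`. -/
theorem horoball_quasiisometry :
    ∀ K ε : ℝ, 1 ≤ K → 0 < ε → ∃ K' : ℝ, 1 ≤ K' ∧
      ∀ (Γ₁ Γ₂ : Type) [inst₁ : MetricSpace Γ₁] [inst₂ : MetricSpace Γ₂],
        (∀ x y : Γ₁, x ≠ y → ε ≤ dist x y) →
        (∀ x y : Γ₂, x ≠ y → ε ≤ dist x y) →
        ∀ f : Γ₁ → Γ₂,
          (∀ x y : Γ₁, (1 / K) * dist x y - K ≤ dist (f x) (f y) ∧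
            dist (f x) (f y) ≤ K * dist x y + K) →
          (∀ z : Γ₂, ∃ x : Γ₁, dist z (f x) ≤ K) →
          (∀ p q : Γ₁ × ℕ,
            (1 / K') * (pathDist (horoballWeight Γ₁) p q).toReal - K' ≤
                (pathDist (horoballWeight Γ₂) (f p.1, p.2) (f q.1, q.2)).toReal ∧
              (pathDist (horoballWeight Γ₂) (f p.1, p.2) (f q.1, q.2)).toReal ≤
                K' * (pathDist (horoballWeight Γ₁) p q).toReal + K') ∧
          (∀ q : Γ₂ × ℕ, ∃ p : Γ₁ × ℕ,
            (pathDist (horoballWeight Γ₂) q (f p.1, p.2)).toReal ≤ K') := by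
  intro K ε hK hε
  have hK₀ : 0 < K := by linarith
  have hL₁ : 1 ≤ K + K / ε := by linarith [div_nonneg hK₀.le hε.le]
  have hL₂ : 1 ≤ K + 3 * K ^ 2 / ε := by linarith [div_nonneg (by positivity : 0 ≤ 3 * K ^ 2) hε.le]
  refine ⟨(K + K / ε) + (K + 3 * K ^ 2 / ε) + 4 * K ^ 2, by nlinarith, ?_⟩
  intro Γ₁ Γ₂ _ _ hsep₁ hsep₂ f hf hcobounded
  choose g hg using hcobounded
  have hlower : ∀ x y, 1 / K * dist x y - K ≤ dist (f x) (f y) := fun x y => (hf x y).1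
  have hF := horoDist_map_le hL₁ fun x y hxy =>
    dist_le_mul_dist_of_separated hε hK₀.le hsep₁ (fun x y => (hf x y).2) hxy
  have hG := horoDist_map_le hL₂ fun z w hzw =>
    dist_le_mul_dist_of_separated hε (by positivity) hsep₂ (dist_quasiInverse_le hK₀ hlower hg) hzw
  have hback := horoDist_le_of_quasiInverse hG (dist_quasiInverse_comp_le hK₀ hlower hg)
  refine ⟨fun p q => quasiIsometry_bounds ENNReal.toReal_nonneg ENNReal.toReal_nonneg
    (by nlinarith) (by nlinarith) (by nlinarith) (by nlinarith) (hF p q) (hback p q),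
    fun ⟨z, n⟩ => ⟨(g z, n), (horoDist_le_dist _ _ n).trans (by nlinarith [hg z])⟩⟩
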